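/- arXiv:1911.04829 — 4 statements merged into one kernel-verified Lean document; each statement's English description precedes it below -/
import Mathlib

section
/- If G is a finite group with the sum of orders of its normal subgroups at most 2|G|, then every abelian quotient of G is cyclic. -/
/-!
If `G ⧸ N` is abelian but not cyclic, the preimages of its subgroups are normal in `G` and
have `|N|` times their order, so `σ(G) ≥ |N| · σ(G ⧸ N)`. In the noncyclic abelian group `G ⧸ N`
the proper nontrivial cyclic subgroups cover the whole group, so together with `⊥` and `⊤` they
give `σ(G ⧸ N) ≥ 1 + |G ⧸ N| + |G ⧸ N| > 2 |G ⧸ N|`, hence `σ(G) > 2 |G|`.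
-/

open scoped Classical

noncomputable def sigmaN (G : Type*) [Group G] [Fintype G] : ℕ :=
  ∑ H ∈ {H : Subgroup G | H.Normal}.toFinite.toFinset, Nat.card H

noncomputable def tauN (G : Type*) [Group G] [Fintype G] : ℕ :=
  {H : Subgroup G | H.Normal}.toFinite.toFinset.card

def IsLeinster (G : Type*) [Group G] [Fintype G] : Prop :=
  sigmaN G = 2 * Fintype.card G

open Finset Subgroup

section

variable {G : Type*} [Group G] [Fintype G]

theorem sum_card_le_sigmaN {S : Finset (Subgroup G)} (hS : ∀ H ∈ S, H.Normal) :
    ∑ H ∈ S, Nat.card H ≤ sigmaN G :=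
  sum_le_sum_of_subset fun H hH => (Set.Finite.mem_toFinset _).mpr (hS H hH)

theorem card_mul_sigmaN_quotient_le (N : Subgroup G) [N.Normal] :
    Nat.card N * sigmaN (G ⧸ N) ≤ sigmaN G := by
  let preimage : Subgroup (G ⧸ N) → Subgroup G := comap (QuotientGroup.mk' N)
  have hinj : Function.Injective preimage := comap_injective (QuotientGroup.mk'_surjective N)
  calc Nat.card N * sigmaN (G ⧸ N)
      = ∑ H ∈ {H : Subgroup (G ⧸ N) | H.Normal}.toFinite.toFinset, Nat.card (preimage H) := by
        simp only [sigmaN, mul_sum]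
        exact sum_congr rfl fun H _ => (QuotientGroup.card_preimage_mk N H).symm
    _ = ∑ H ∈ {H : Subgroup (G ⧸ N) | H.Normal}.toFinite.toFinset.image preimage,
          Nat.card H := by
        rw [sum_image fun _ _ _ _ h => hinj h]
    _ ≤ sigmaN G := sum_card_le_sigmaN <| by
        simp only [mem_image, Set.Finite.mem_toFinset, Set.mem_ofPred_eq]
        rintro _ ⟨H, hH, rfl⟩
        exact hH.comap _

theorem card_le_sum_card_of_forall_exists_mem {S : Finset (Subgroup G)}
    (hS : ∀ g : G, ∃ H ∈ S, g ∈ H) : Fintype.card G ≤ ∑ H ∈ S, Nat.card H := by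
  calc Fintype.card G = #(S.biUnion fun H => univ.filter (· ∈ H)) := by
        rw [← card_univ]
        congr 1
        ext g
        simpa using hS g
    _ ≤ ∑ H ∈ S, #(univ.filter (· ∈ H)) := card_biUnion_le
    _ = ∑ H ∈ S, Nat.card H := by
        simp only [Nat.card_eq_fintype_card, Fintype.card_subtype]

theorem two_mul_card_lt_sigmaN (hG : ¬IsCyclic G) (hnormal : ∀ g : G, (zpowers g).Normal) :
    2 * Fintype.card G < sigmaN G := by
  have : Nontrivial G := not_subsingleton_iff_nontrivial.mp fun _ => hG inferInstance
  obtain ⟨a, ha⟩ := exists_ne (1 : G)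
  set S := (univ.filter (· ≠ (1 : G))).image zpowers
  have hbot : ⊥ ∉ S := by simp [S, zpowers_eq_bot]
  have htop : ⊤ ∉ S := by
    simpa [S] using fun g _ hg => hG (isCyclic_iff_exists_zpowers_eq_top.mpr ⟨g, hg⟩)
  have hcover : ∀ g : G, ∃ H ∈ S, g ∈ H := fun g => by
    rcases eq_or_ne g 1 with rfl | hg
    · exact ⟨zpowers a, mem_image_of_mem _ (by simpa using ha), one_mem _⟩
    · exact ⟨zpowers g, mem_image_of_mem _ (by simpa using hg), mem_zpowers g⟩
  calc 2 * Fintype.card G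
      < Nat.card (⊥ : Subgroup G) + (Nat.card (⊤ : Subgroup G) + ∑ H ∈ S, Nat.card H) := by
        have := card_le_sum_card_of_forall_exists_mem hcover
        rw [card_bot, card_top, Nat.card_eq_fintype_card]
        omega
    _ = ∑ H ∈ insert ⊥ (insert ⊤ S), Nat.card H := by
        rw [sum_insert (by simp [hbot]), sum_insert htop]
    _ ≤ sigmaN G := sum_card_le_sigmaN <| by
        simp only [mem_insert, S, mem_image]
        rintro _ (rfl | rfl | ⟨g, -, rfl⟩)
        exacts [normal_bot, normal_top, hnormal g]

end

theorem stmt1 (G : Type*) [Group G] [Fintype G] (h : sigmaN G ≤ 2 * Fintype.card G)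
    (N : Subgroup G) [N.Normal] (hab : ∀ a b : G ⧸ N, a * b = b * a) :
    IsCyclic (G ⧸ N) := by
  by_contra hG
  have hnormal (g : G ⧸ N) : (zpowers g).Normal :=
    ⟨fun n _ x => by rwa [hab x n, mul_inv_cancel_right]⟩
  have hcard : Fintype.card G = Nat.card N * Fintype.card (G ⧸ N) := by
    rw [← Nat.card_eq_fintype_card, ← Nat.card_eq_fintype_card,
      card_eq_card_quotient_mul_card_subgroup N, mul_comm]
  have hbound : Nat.card N * sigmaN (G ⧸ N) ≤ Nat.card N * (2 * Fintype.card (G ⧸ N)) :=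
    calc Nat.card N * sigmaN (G ⧸ N) ≤ sigmaN G := card_mul_sigmaN_quotient_le N
      _ ≤ 2 * Fintype.card G := h
      _ = Nat.card N * (2 * Fintype.card (G ⧸ N)) := by rw [hcard]; ring
  exact (two_mul_card_lt_sigmaN hG hnormal).not_ge (le_of_mul_le_mul_left hbound Nat.card_pos)
end

section
/- The group Q₂₀ × C₁₉ is a Leinster group, where Q₂₀ is the generalized quaternion (dicyclic) group of order 20. -/
open scoped Classical

/-
For coprime orders every subgroup of `A × B` is the product of its two projections, so the sum
`sigmaN` of the orders of the normal subgroups is multiplicative.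
In the dicyclic group `Q_{4n}` with `n` odd, a normal subgroup containing some `xa i` contains
`a n = (xa i) ^ 2` and, through the conjugate `xa (i - 2)`, also `a 2`; hence it contains `a 1`
and is everything. The remaining normal subgroups are the subgroups of the cyclic group `⟨a 1⟩`
of order `2n` (all normal, since conjugation by `xa j` inverts `a 1`), one of order `2n / d` for
each `d ∣ 2n`. So `sigmaN Q_{4n} = 4n + σ₁(2n)`, and
`sigmaN (Q₂₀ × C₁₉) = (20 + 18) * (19 + 1) = 2 * 380`.
-/

section CoprimeProduct

variable {A B : Type*} [Group A] [Group B]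

lemma exists_pow_eq_self_and_pow_eq_one {x : A} {y : B} (h : (orderOf x).Coprime (orderOf y)) :
    ∃ k : ℕ, x ^ k = x ∧ y ^ k = 1 := by
  obtain ⟨m, hm⟩ := exists_pow_eq_self_of_coprime h.symm
  exact ⟨orderOf y * m, by rwa [pow_mul], by rw [pow_mul, pow_orderOf_eq_one, one_pow]⟩

lemma Subgroup.eq_prod_map_of_coprime [Finite A] [Finite B]
    (hco : (Nat.card A).Coprime (Nat.card B)) (H : Subgroup (A × B)) :
    H = (H.map (MonoidHom.fst A B)).prod (H.map (MonoidHom.snd A B)) := by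
  refine le_antisymm (fun p hp => ⟨⟨p, hp, rfl⟩, ⟨p, hp, rfl⟩⟩) ?_
  rintro ⟨x, y⟩ ⟨⟨⟨x, y'⟩, hx, rfl⟩, ⟨⟨x', y⟩, hy, rfl⟩⟩
  have hcop : ∀ (u : A) (v : B), (orderOf u).Coprime (orderOf v) := fun u v =>
    (hco.coprime_dvd_left (_root_.orderOf_dvd_natCard u)).coprime_dvd_right
      (_root_.orderOf_dvd_natCard v)
  obtain ⟨k, hxk, hyk⟩ := exists_pow_eq_self_and_pow_eq_one (hcop x y')
  obtain ⟨l, hyl, hxl⟩ := exists_pow_eq_self_and_pow_eq_one (hcop x' y).symm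
  have hmul := H.mul_mem (H.pow_mem hx k) (H.pow_mem hy l)
  simpa [Prod.pow_mk, hxk, hyk, hxl, hyl] using hmul

lemma Subgroup.map_fst_prod (K : Subgroup A) (L : Subgroup B) :
    (K.prod L).map (MonoidHom.fst A B) = K :=
  le_antisymm (by rintro _ ⟨p, hp, rfl⟩; exact hp.1)
    fun x hx => ⟨(x, 1), ⟨hx, L.one_mem⟩, rfl⟩

lemma Subgroup.map_snd_prod (K : Subgroup A) (L : Subgroup B) :
    (K.prod L).map (MonoidHom.snd A B) = L :=
  le_antisymm (by rintro _ ⟨p, hp, rfl⟩; exact hp.2)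
    fun y hy => ⟨(1, y), ⟨K.one_mem, hy⟩, rfl⟩

lemma Subgroup.card_prod (K : Subgroup A) (L : Subgroup B) :
    Nat.card (K.prod L) = Nat.card K * Nat.card L := by
  rw [Nat.card_congr (K.prodEquiv L).toEquiv, Nat.card_prod]

lemma sigmaN_prod_of_coprime [Fintype A] [Fintype B] (hco : (Nat.card A).Coprime (Nat.card B)) :
    sigmaN (A × B) = sigmaN A * sigmaN B := by
  rw [sigmaN, sigmaN, sigmaN, Finset.sum_mul_sum, ← Finset.sum_product']
  refine Finset.sum_nbij' (fun H => (H.map (MonoidHom.fst A B), H.map (MonoidHom.snd A B)))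
    (fun KL => KL.1.prod KL.2) ?_ ?_ ?_ ?_ ?_
  · intro H hH
    simp only [Set.Finite.mem_toFinset, Finset.mem_product, Set.mem_ofPred_eq] at hH ⊢
    exact ⟨hH.map _ Prod.fst_surjective, hH.map _ Prod.snd_surjective⟩
  · rintro ⟨K, L⟩ hKL
    simp only [Set.Finite.mem_toFinset, Finset.mem_product, Set.mem_ofPred_eq] at hKL ⊢
    have := hKL.1; have := hKL.2
    infer_instance
  · exact fun H _ => (H.eq_prod_map_of_coprime hco).symm
  · rintro ⟨K, L⟩ _
    simp only [Subgroup.map_fst_prod, Subgroup.map_snd_prod]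
  · intro H _
    rw [← Subgroup.card_prod, ← H.eq_prod_map_of_coprime hco]

end CoprimeProduct

lemma sigmaN_of_card_prime {G : Type*} [Group G] [Fintype G] (hp : (Nat.card G).Prime) :
    sigmaN G = Nat.card G + 1 := by
  have : Fact (Nat.card G).Prime := ⟨hp⟩
  have : Nontrivial G := Finite.one_lt_card_iff_nontrivial.mp hp.one_lt
  have hnormal : {H : Subgroup G | H.Normal}.toFinite.toFinset = {⊥, ⊤} := by
    ext H
    simp only [Set.Finite.mem_toFinset, Set.mem_ofPred_eq, Finset.mem_insert,
      Finset.mem_singleton]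
    exact ⟨fun _ => H.eq_bot_or_eq_top_of_prime_card, by rintro (rfl | rfl) <;> infer_instance⟩
  rw [sigmaN, hnormal, Finset.sum_pair bot_ne_top, Subgroup.card_bot, Subgroup.card_top, add_comm]

open Subgroup ArithmeticFunction
open scoped ArithmeticFunction.sigma

lemma zpowers_pow_gcd_orderOf {G : Type*} [Group G] [Finite G] (g : G) (k : ℕ) :
    zpowers (g ^ (orderOf g).gcd k) = zpowers (g ^ k) := by
  symm
  refine eq_of_le_of_card_ge (zpowers_le.mpr ?_) ?_
  · obtain ⟨m, hm⟩ := Nat.gcd_dvd_right (orderOf g) k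
    exact mem_zpowers_iff.mpr ⟨m, by rw [zpow_natCast, ← pow_mul, ← hm]⟩
  · rw [Nat.card_zpowers, Nat.card_zpowers, orderOf_pow, orderOf_pow, Nat.gcd_gcd_self_right_left]

namespace QuaternionGroup

variable {n : ℕ}

lemma conj_a_mem_zpowers (g : QuaternionGroup n) (k : ZMod (2 * n)) :
    g * a k * g⁻¹ ∈ zpowers (a k) := by
  rcases g with j | j
  · have : a j * a k * (a j)⁻¹ = a k := by
      show a j * a k * a (-j) = a k
      simp only [a_mul_a, add_neg_cancel_comm]
    rw [this]
    exact mem_zpowers _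
  · have : xa j * a k * (xa j)⁻¹ = (a k)⁻¹ := by
      show xa j * a k * xa ((n : ZMod (2 * n)) + j) = a (-k)
      rw [xa_mul_a, xa_mul_xa]
      congr 1
      have : ((2 * n : ℕ) : ZMod (2 * n)) = 0 := ZMod.natCast_self _
      push_cast at this
      linear_combination this
    rw [this]
    exact inv_mem (mem_zpowers _)

lemma normal_zpowers_a (k : ZMod (2 * n)) : (zpowers (a k : QuaternionGroup n)).Normal :=
  ⟨fun x hx g => by
    obtain ⟨m, rfl⟩ := mem_zpowers_iff.mp hx
    rw [← conj_zpow]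
    exact zpow_mem (conj_a_mem_zpowers g k) m⟩

lemma a_mem_zpowers_a_one [NeZero n] (j : ZMod (2 * n)) :
    a j ∈ zpowers (a 1 : QuaternionGroup n) :=
  mem_zpowers_iff.mpr ⟨j.val, by rw [zpow_natCast, a_one_pow, ZMod.natCast_zmod_val]⟩

lemma eq_top_of_xa_mem (hn : Odd n) {H : Subgroup (QuaternionGroup n)} [hH : H.Normal]
    {i : ZMod (2 * n)} (hi : xa i ∈ H) : H = ⊤ := by
  have : NeZero n := ⟨hn.pos.ne'⟩
  have han : a n ∈ H := xa_sq i ▸ H.pow_mem hi 2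
  have hconj : xa (i - 2) ∈ H := by
    have : a 1 * xa i * (a 1)⁻¹ = xa (i - 2) := by
      show a 1 * xa i * a (-1) = xa (i - 2)
      rw [a_mul_xa, xa_mul_a]
      ring_nf
    exact this ▸ hH.conj_mem _ hi (a 1)
  have ha2 : a 2 ∈ H := by
    have : (a n)⁻¹ * (xa (i - 2) * xa i) = a 2 := by
      show a (-n) * (xa (i - 2) * xa i) = a 2
      rw [xa_mul_xa, a_mul_a]
      ring_nf
    exact this ▸ H.mul_mem (H.inv_mem han) (H.mul_mem hconj hi)
  -- `a n` and `a 2` generate `⟨a 1⟩` because `n` is odd.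
  have ha1 : a 1 ∈ H := by
    obtain ⟨m, rfl⟩ := hn
    have : (a 1) ^ (2 * (m + 1)) * (a ↑(2 * m + 1))⁻¹ =
        (a 1 : QuaternionGroup (2 * m + 1)) := by
      show (a 1) ^ (2 * (m + 1)) * a (-↑(2 * m + 1)) = a 1
      rw [a_one_pow, a_mul_a]
      push_cast
      ring_nf
    rw [← this, pow_mul]
    exact H.mul_mem (H.pow_mem (a_one_pow (n := 2 * m + 1) 2 ▸ ha2) _) (H.inv_mem han)
  refine eq_top_iff.mpr fun g _ => ?_
  rcases g with j | j
  · exact zpowers_le.mpr ha1 (a_mem_zpowers_a_one j)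
  · have : xa i * a (j - i) = xa j := by rw [xa_mul_a, add_sub_cancel]
    exact this ▸ H.mul_mem hi (zpowers_le.mpr ha1 (a_mem_zpowers_a_one _))

lemma card_zpowers_a_one_pow {d : ℕ} (hd : d ∈ (2 * n).divisors) :
    Nat.card (zpowers (a 1 ^ d : QuaternionGroup n)) = 2 * n / d := by
  have hdvd : d ∣ orderOf (a 1 : QuaternionGroup n) :=
    orderOf_a_one.symm ▸ Nat.dvd_of_mem_divisors hd
  rw [Nat.card_zpowers, orderOf_pow_of_dvd (Nat.pos_of_mem_divisors hd).ne' hdvd, orderOf_a_one]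

lemma normal_iff (hn : Odd n) {H : Subgroup (QuaternionGroup n)} :
    H.Normal ↔ H = ⊤ ∨ ∃ d ∈ (2 * n).divisors, H = zpowers (a 1 ^ d) := by
  have : NeZero n := ⟨hn.pos.ne'⟩
  constructor
  · intro hH
    by_cases hxa : ∃ i, xa i ∈ H
    · obtain ⟨i, hi⟩ := hxa
      exact Or.inl (eq_top_of_xa_mem hn hi)
    · simp only [not_exists] at hxa
      have hle : H ≤ zpowers (a 1) := by
        rintro (j | j) hj
        · exact a_mem_zpowers_a_one j
        · exact absurd hj (hxa j)
      obtain ⟨k, rfl⟩ := (le_zpowers_iff _ H).mp hle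
      refine Or.inr ⟨(2 * n).gcd k, ?_, ?_⟩
      · exact Nat.mem_divisors.mpr ⟨Nat.gcd_dvd_left _ _, NeZero.ne _⟩
      · have := zpowers_pow_gcd_orderOf (a 1 : QuaternionGroup n) k
        rw [orderOf_a_one] at this
        exact this.symm
  · rintro (rfl | ⟨d, -, rfl⟩)
    · infer_instance
    · rw [a_one_pow]
      exact normal_zpowers_a _

lemma sigmaN_eq [NeZero n] (hn : Odd n) : sigmaN (QuaternionGroup n) = 4 * n + σ 1 (2 * n) := by
  have hnormal : {H : Subgroup (QuaternionGroup n) | H.Normal}.toFinite.toFinset =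
      insert ⊤ ((2 * n).divisors.image fun d => zpowers (a 1 ^ d)) := by
    ext H
    simp only [Set.Finite.mem_toFinset, Set.mem_ofPred_eq, Finset.mem_insert, Finset.mem_image,
      normal_iff hn, eq_comm (a := H)]
  have hcard_top : Nat.card (⊤ : Subgroup (QuaternionGroup n)) = 4 * n := by
    rw [Subgroup.card_top, Nat.card_eq_fintype_card, card]
  have htop : ⊤ ∉ (2 * n).divisors.image fun d => zpowers (a 1 ^ d : QuaternionGroup n) := by
    intro h
    obtain ⟨d, hd, hdtop⟩ := Finset.mem_image.mp h
    have := congrArg (fun K : Subgroup _ => Nat.card K) hdtop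
    simp only [card_zpowers_a_one_pow hd, hcard_top] at this
    have := Nat.div_le_self (2 * n) d
    have := NeZero.pos n
    omega
  have hinj : Set.InjOn (fun d => zpowers (a 1 ^ d : QuaternionGroup n)) (2 * n).divisors := by
    intro d hd e he hde
    have := congrArg (fun K : Subgroup _ => Nat.card K) hde
    simp only [card_zpowers_a_one_pow hd, card_zpowers_a_one_pow he] at this
    rw [← Nat.div_div_self (Nat.dvd_of_mem_divisors hd) (NeZero.ne _), this,
      Nat.div_div_self (Nat.dvd_of_mem_divisors he) (NeZero.ne _)]
  rw [sigmaN, hnormal, Finset.sum_insert htop, Finset.sum_image hinj, hcard_top,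
    Finset.sum_congr rfl fun d hd => card_zpowers_a_one_pow hd, sigma_one_apply]
  exact congrArg (4 * n + ·) (Nat.sum_div_divisors _ id)

end QuaternionGroup

theorem stmt3 : IsLeinster (QuaternionGroup 5 × Multiplicative (ZMod 19)) := by
  have hQ : Nat.card (QuaternionGroup 5) = 20 := by
    rw [Nat.card_eq_fintype_card, QuaternionGroup.card]
  have hC : Nat.card (Multiplicative (ZMod 19)) = 19 := by simp
  rw [IsLeinster, sigmaN_prod_of_coprime (by rw [hQ, hC]; norm_num),
    QuaternionGroup.sigmaN_eq (by decide), sigmaN_of_card_prime (by rw [hC]; norm_num),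
    Fintype.card_prod, ← Nat.card_eq_fintype_card, ← Nat.card_eq_fintype_card, hQ, hC]
  decide
end

section
/- If G is a Leinster group of order p²qr with p < q < r primes, then the commutator subgroup of G does not have order r. -/
open scoped Classical

/-!
Let `Q = G ⧸ G'`, of order `p²q`, and let `σ(A)` be the sum of the orders of all subgroups of `A`.
Normal subgroups of `G` containing the kernel of a surjection onto an abelian group `A` correspond
to subgroups of `A`, so their orders sum to `|ker| · σ(A)`.

If `Q` is not cyclic, neither is `Q ⧸ Q₀` for `Q₀` of order `q`. A non-cyclic group of order `p²`
has at least `p + 1` subgroups of order `p`, so `σ(Q ⧸ Q₀) > 2p²`, and the normal subgroups of `G`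
above the kernel of `G → Q ⧸ Q₀` alone already have orders summing past `2|G|`.

If `Q` is cyclic, `σ(Q) = (1 + p + p²)(1 + q)`. A normal subgroup `N` not containing `G'` meets it
trivially, so `N ↦ N G' ⧸ G'` preserves orders; it is injective because these orders are prime
to `r`, and it misses `Q` because `N G' = G` would make `G ⧸ N` abelian. Hence the sum `S` of their
orders satisfies `0 < S ≤ σ(Q) - p²q`, while the Leinster condition reads `r σ(Q) + S = 2p²qr`;
for `p < q < r` these are incompatible.
-/

noncomputable def subgroupSum (H : Type*) [Group H] [Fintype H] : ℕ :=
  ∑ B : Subgroup H, Nat.card B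

section General

variable {G H : Type*} [Group G] [Group H]

lemma sigmaN_eq_sum_filter_normal [Fintype G] :
    sigmaN G = ∑ N : Subgroup G with N.Normal, Nat.card N := by
  rw [sigmaN, Set.toFinite_toFinset, Set.toFinset_ofPred]

lemma card_comap_of_surjective [Finite G] {f : G →* H} (hf : Function.Surjective f)
    (B : Subgroup H) : Nat.card (B.comap f) = Nat.card B * Nat.card f.ker := by
  have : Finite H := Finite.of_surjective f hf
  have hG := (B.comap f).card_mul_index
  rw [B.index_comap_of_surjective hf, ← f.ker.card_mul_index, Subgroup.index_ker,
    f.range_eq_top.mpr hf, Subgroup.card_top, ← B.card_mul_index] at hG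
  refine Nat.eq_of_mul_eq_mul_right (Nat.pos_of_ne_zero B.index_ne_zero_of_finite) ?_
  rw [hG]
  ring

lemma card_map_of_inf_ker_eq_bot {f : G →* H} {N : Subgroup G} (h : N ⊓ f.ker = ⊥) :
    Nat.card (N.map f) = Nat.card N := by
  have hinj : Function.Injective (f.domRestrict N) := by
    rw [← MonoidHom.ker_eq_bot_iff, MonoidHom.ker_domRestrict, Subgroup.subgroupOf_eq_bot,
      disjoint_iff, inf_comm, h]
  rw [← MonoidHom.domRestrict_range]
  exact (Nat.card_congr (MonoidHom.ofInjective hinj).toEquiv).symm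

lemma le_of_le_sup_of_coprime {N K C : Subgroup G} [N.Normal] (hC : C ≤ N ⊔ K)
    (hcop : (Nat.card C).Coprime (Nat.card K)) : C ≤ N := by
  have hle : C.map (QuotientGroup.mk' N) ≤ K.map (QuotientGroup.mk' N) := by
    simpa [Subgroup.map_sup] using Subgroup.map_mono (f := QuotientGroup.mk' N) hC
  have hone : Nat.card (C.map (QuotientGroup.mk' N)) = 1 :=
    Nat.eq_one_of_dvd_coprimes hcop (Subgroup.card_map_dvd _ _)
      ((Subgroup.card_dvd_of_le hle).trans (Subgroup.card_map_dvd _ _))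
  rw [Subgroup.card_eq_one, Subgroup.map_eq_bot_iff, QuotientGroup.ker_mk'] at hone
  exact hone

lemma inf_eq_bot_of_not_le {N K : Subgroup G} (hK : (Nat.card K).Prime) (h : ¬ K ≤ N) :
    N ⊓ K = ⊥ := by
  have : Finite K := Nat.finite_of_card_ne_zero hK.ne_zero
  rcases (Nat.dvd_prime hK).mp (Subgroup.card_dvd_of_le (inf_le_right : N ⊓ K ≤ K)) with h1 | h1
  · exact Subgroup.card_eq_one.mp h1
  · exact absurd ((Subgroup.eq_of_le_of_card_ge inf_le_right h1.ge).ge.trans inf_le_left) h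

lemma card_mul_card_ker_of_surjective [Finite G] {f : G →* H} (hf : Function.Surjective f) :
    Nat.card H * Nat.card f.ker = Nat.card G := by
  simpa using (card_comap_of_surjective hf ⊤).symm

end General

section Correspondence

variable {G H : Type*} [Group G] [Fintype G] [CommGroup H] [Fintype H]

lemma sigmaN_eq_of_surjective {f : G →* H} (hf : Function.Surjective f) :
    sigmaN G = Nat.card f.ker * subgroupSum H +
      ∑ N : Subgroup G with N.Normal ∧ ¬ f.ker ≤ N, Nat.card N := by
  have hcorr : ∑ N : Subgroup G with N.Normal ∧ f.ker ≤ N, Nat.card N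
      = Nat.card f.ker * subgroupSum H := by
    rw [subgroupSum, Finset.mul_sum]
    refine Finset.sum_nbij' (Subgroup.map f) (Subgroup.comap f) (by simp) ?_ ?_ ?_ ?_
    · intro B _
      simpa using ⟨(Subgroup.normal_of_isMulCommutative B).comap f, Subgroup.ker_le_comap f B⟩
    · intro N hN
      exact Subgroup.comap_map_eq_self (Finset.mem_filter.mp hN).2.2
    · intro B _
      exact Subgroup.map_comap_eq_self_of_surjective hf B
    · intro N hN
      rw [mul_comm, ← card_comap_of_surjective hf,
        Subgroup.comap_map_eq_self (Finset.mem_filter.mp hN).2.2]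
  rw [sigmaN_eq_sum_filter_normal, ← hcorr, ← Finset.filter_filter, ← Finset.filter_filter]
  exact (Finset.sum_filter_add_sum_filter_not _ (fun N => f.ker ≤ N) _).symm

lemma two_mul_card_lt_sigmaN_of_surjective {f : G →* H} (hf : Function.Surjective f)
    (h : 2 * Nat.card H < subgroupSum H) : 2 * Nat.card G < sigmaN G :=
  calc 2 * Nat.card G = Nat.card f.ker * (2 * Nat.card H) := by
        rw [← card_mul_card_ker_of_surjective hf]; ring
    _ < Nat.card f.ker * subgroupSum H := Nat.mul_lt_mul_of_pos_left h Nat.card_pos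
    _ ≤ sigmaN G := (sigmaN_eq_of_surjective hf).ge.trans' (Nat.le_add_right _ _)

end Correspondence

lemma IsCyclic.eq_ker_powMonoidHom_card {Q : Type*} [CommGroup Q] [Finite Q] [IsCyclic Q]
    (B : Subgroup Q) : B = (powMonoidHom (Nat.card B) : Q →* Q).ker := by
  refine Subgroup.eq_of_le_of_card_ge (fun x hx => ?_) ?_
  · have := congrArg Subtype.val (pow_card_eq_one' (x := (⟨x, hx⟩ : B)))
    simpa only [MonoidHom.mem_ker, powMonoidHom_apply, Subgroup.coe_pow, Subgroup.coe_one]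
      using this
  · rw [IsCyclic.card_powMonoidHom_ker, Nat.gcd_eq_right B.card_subgroup_dvd_card]

lemma IsCyclic.subgroupSum_eq_sum_divisors {Q : Type*} [CommGroup Q] [Fintype Q]
    [IsCyclic Q] : subgroupSum Q = ∑ d ∈ (Nat.card Q).divisors, d := by
  refine Finset.sum_nbij' (fun B => Nat.card B) (fun d => (powMonoidHom d : Q →* Q).ker)
    (fun B _ => Nat.mem_divisors.mpr ⟨B.card_subgroup_dvd_card, Nat.card_pos.ne'⟩)
    (by simp) (fun B _ => (IsCyclic.eq_ker_powMonoidHom_card B).symm) (fun d hd => ?_)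
    (fun _ _ => rfl)
  rw [IsCyclic.card_powMonoidHom_ker, Nat.gcd_eq_right (Nat.dvd_of_mem_divisors hd)]

section NonCyclic

variable {P : Type*} [Group P] [Fintype P] {p : ℕ}

lemma orderOf_eq_prime_of_not_isCyclic (hp : p.Prime) (hcard : Nat.card P = p ^ 2)
    (hP : ¬ IsCyclic P) {x : P} (hx : x ≠ 1) : orderOf x = p := by
  obtain ⟨i, hi, hx'⟩ := (Nat.dvd_prime_pow hp).mp (hcard ▸ orderOf_dvd_natCard x)
  interval_cases i
  · exact absurd (orderOf_eq_one_iff.mp (by simpa using hx')) hx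
  · simpa using hx'
  · exact absurd (isCyclic_of_orderOf_eq_card x (hx'.trans hcard.symm)) hP

lemma add_one_le_card_subgroups_of_not_isCyclic (hp : p.Prime) (hcard : Nat.card P = p ^ 2)
    (hP : ¬ IsCyclic P) :
    p + 1 ≤ (Finset.univ.filter fun B : Subgroup P => Nat.card B = p).card := by
  set S := Finset.univ.filter fun B : Subgroup P => Nat.card B = p
  have hcover : Finset.univ.erase 1 ⊆ S.biUnion fun B => (B : Set P).toFinset.erase 1 := by
    intro x hx
    have hx1 := Finset.ne_of_mem_erase hx
    refine Finset.mem_biUnion.mpr ⟨Subgroup.zpowers x, ?_, ?_⟩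
    · simp only [S, Finset.mem_filter, Finset.mem_univ, true_and, Nat.card_zpowers]
      exact orderOf_eq_prime_of_not_isCyclic hp hcard hP hx1
    · simp [hx1]
  have hfiber : ∀ B ∈ S, ((B : Set P).toFinset.erase 1).card = p - 1 := by
    intro B hB
    rw [Finset.card_erase_of_mem (by simp), ← Nat.card_eq_card_toFinset, SetLike.coe_sort_coe,
      (Finset.mem_filter.mp hB).2]
  have hle : (p - 1) * (p + 1) ≤ (p - 1) * S.card := by
    calc (p - 1) * (p + 1) = (Finset.univ.erase (1 : P)).card := by
          rw [Finset.card_erase_of_mem (Finset.mem_univ _), Finset.card_univ,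
            ← Nat.card_eq_fintype_card, hcard]
          have := hp.one_lt
          zify [this.le, Nat.one_le_pow 2 p hp.pos]
          ring
      _ ≤ ∑ B ∈ S, ((B : Set P).toFinset.erase 1).card :=
          (Finset.card_le_card hcover).trans Finset.card_biUnion_le
      _ = (p - 1) * S.card := by rw [Finset.sum_congr rfl hfiber, Finset.sum_const, smul_eq_mul,
          mul_comm]
  exact Nat.le_of_mul_le_mul_left hle (Nat.sub_pos_of_lt hp.one_lt)

lemma two_mul_card_lt_subgroupSum_of_not_isCyclic (hp : p.Prime) (hcard : Nat.card P = p ^ 2)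
    (hP : ¬ IsCyclic P) : 2 * Nat.card P < subgroupSum P := by
  set S := Finset.univ.filter fun B : Subgroup P => Nat.card B = p
  have htop : (⊤ : Subgroup P) ∉ S := by
    simp only [S, Finset.mem_filter, Finset.mem_univ, true_and, Subgroup.card_top, hcard]
    nlinarith [hp.two_le]
  have hS := add_one_le_card_subgroups_of_not_isCyclic hp hcard hP
  calc 2 * Nat.card P < p ^ 2 + p * (p + 1) := by rw [hcard]; nlinarith [hp.two_le]
    _ ≤ p ^ 2 + p * S.card := by gcongr
    _ = ∑ B ∈ insert ⊤ S, Nat.card B := by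
        rw [Finset.sum_insert htop, Subgroup.card_top, hcard,
          Finset.sum_congr rfl fun B hB => (Finset.mem_filter.mp hB).2, Finset.sum_const,
          smul_eq_mul, mul_comm]
    _ ≤ subgroupSum P := Finset.sum_le_sum_of_subset (Finset.subset_univ _)

end NonCyclic

lemma leinster_count_contradiction {p q r S : ℕ} (hp : p.Prime) (hq : q.Prime) (hpq : p < q)
    (hqr : q < r) (hsum : r * ((1 + p + p ^ 2) * (1 + q)) + S = 2 * (p ^ 2 * q * r))
    (hS : S + p ^ 2 * q ≤ (1 + p + p ^ 2) * (1 + q)) (hS0 : 0 < S) : False := by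
  obtain ⟨k, hk⟩ : ∃ k, k + (1 + p + p ^ 2) * (1 + q) = 2 * (p ^ 2 * q) := by
    refine ⟨2 * (p ^ 2 * q) - (1 + p + p ^ 2) * (1 + q), Nat.sub_add_cancel ?_⟩
    by_contra! h
    nlinarith
  have hSk : S = r * k := by nlinarith
  have hk' : (q + 2) * k ≤ p ^ 2 * q := by nlinarith
  rcases hp.two_le.eq_or_lt' with rfl | hp3
  · have hq8 : 8 ≤ q := by nlinarith
    have hq10 : q ≤ 10 := by nlinarith
    interval_cases q <;> norm_num at hq
  · replace hp3 : 3 ≤ p := hp3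
    have hq5 : 5 ≤ q := by
      by_contra! h
      obtain rfl : q = 4 := by omega
      norm_num at hq
    zify at hk hk' hp3 hq5
    have hp3' := sub_nonneg.mpr hp3
    have hq5' := sub_nonneg.mpr hq5
    have h3k : (p : ℤ) ^ 2 * (q - 2) ≤ 3 * k := by
      nlinarith [mul_nonneg (mul_nonneg hp3' hq5') hp3', mul_nonneg hp3' hq5']
    nlinarith [mul_pos (pow_pos (by omega : (0 : ℤ) < p) 2)
      (mul_pos (by omega : (0 : ℤ) < q - 4) (by omega : (0 : ℤ) < q + 1))]

section Abelianization

variable {G : Type*} [Group G] [Fintype G]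

lemma sum_card_normal_not_commutator_le_add_card_le (hK : (Nat.card (commutator G)).Prime)
    (hcop : (Nat.card (commutator G)).Coprime (Nat.card (Abelianization G))) :
    ∑ N : Subgroup G with N.Normal ∧ ¬ commutator G ≤ N, Nat.card N
      + Nat.card (Abelianization G) ≤ subgroupSum (Abelianization G) := by
  set f : G →* Abelianization G := Abelianization.of
  have hker : f.ker = commutator G := Abelianization.ker_of G
  set 𝒩₀ := Finset.univ.filter fun N : Subgroup G => N.Normal ∧ ¬ commutator G ≤ N
  have hcard : ∀ N ∈ 𝒩₀, Nat.card (N.map f) = Nat.card N := fun N hN =>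
    card_map_of_inf_ker_eq_bot (hker ▸ inf_eq_bot_of_not_le hK (Finset.mem_filter.mp hN).2.2)
  have hle : ∀ N ∈ 𝒩₀, ∀ N' ∈ 𝒩₀, N.map f = N'.map f → N' ≤ N := by
    intro N hN N' hN' h
    have := (Finset.mem_filter.mp hN).2.1
    refine le_of_le_sup_of_coprime (K := commutator G) ?_ ?_
    · rw [← hker, ← Subgroup.comap_map_eq, h, Subgroup.comap_map_eq]
      exact le_sup_left
    · rw [← hcard N' hN']
      exact (hcop.coprime_dvd_right (Subgroup.card_subgroup_dvd_card _)).symm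
  have hinj : Set.InjOn (Subgroup.map f) 𝒩₀ := fun N hN N' hN' h =>
    le_antisymm (hle N' hN' N hN h.symm) (hle N hN N' hN' h)
  have htop : (⊤ : Subgroup (Abelianization G)) ∉ 𝒩₀.image (Subgroup.map f) := by
    simp only [Finset.mem_image, not_exists, not_and]
    intro N hN h
    have := (Finset.mem_filter.mp hN).2.1
    have hsup : N ⊔ commutator G = ⊤ := by
      rw [← hker, ← Subgroup.comap_map_eq, h, Subgroup.comap_top]
    have := Fact.mk hK
    have := isCyclic_of_prime_card (α := commutator G) rfl
    exact (Finset.mem_filter.mp hN).2.2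
      (Subgroup.Normal.commutator_le_of_self_sup_commutative_eq_top hsup inferInstance)
  calc ∑ N ∈ 𝒩₀, Nat.card N + Nat.card (Abelianization G)
      = ∑ B ∈ insert ⊤ (𝒩₀.image (Subgroup.map f)), Nat.card B := by
        rw [Finset.sum_insert htop, Finset.sum_image hinj, Subgroup.card_top, add_comm,
          Finset.sum_congr rfl hcard]
    _ ≤ subgroupSum (Abelianization G) := Finset.sum_le_sum_of_subset (Finset.subset_univ _)

lemma not_isLeinster_of_not_isCyclic_abelianization {p q : ℕ} (hp : p.Prime) (hq : q.Prime)
    (hpq : p ≠ q) (hQ : Nat.card (Abelianization G) = p ^ 2 * q)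
    (hcyc : ¬ IsCyclic (Abelianization G)) : ¬ IsLeinster G := by
  have := Fact.mk hq
  obtain ⟨Q₀, hQ₀⟩ := Sylow.exists_subgroup_card_pow_prime (G := Abelianization G) q (n := 1)
    (by rw [pow_one, hQ]; exact dvd_mul_left _ _)
  rw [pow_one] at hQ₀
  have hquot : Nat.card (Abelianization G ⧸ Q₀) = p ^ 2 := by
    have := Q₀.card_mul_index
    rw [hQ₀, hQ, Subgroup.index, mul_comm (p ^ 2)] at this
    exact Nat.eq_of_mul_eq_mul_left hq.pos this
  have hnc : ¬ IsCyclic (Abelianization G ⧸ Q₀) := by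
    intro hc
    have : IsCyclic (QuotientGroup.mk' Q₀).ker := by
      rw [QuotientGroup.ker_mk']
      exact isCyclic_of_prime_card hQ₀
    refine hcyc (Group.isCyclic_of_coprime_card_ker (QuotientGroup.mk' Q₀) ?_
      (QuotientGroup.mk'_surjective Q₀))
    rw [QuotientGroup.ker_mk', hQ₀, hquot]
    exact Nat.Coprime.pow_right 2 ((Nat.coprime_primes hq hp).mpr hpq.symm)
  intro hL
  have := two_mul_card_lt_sigmaN_of_surjective
    (f := (QuotientGroup.mk' Q₀).comp Abelianization.of)
    ((QuotientGroup.mk'_surjective Q₀).comp (QuotientGroup.mk'_surjective _))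
    (two_mul_card_lt_subgroupSum_of_not_isCyclic hp hquot hnc)
  rw [hL, Nat.card_eq_fintype_card] at this
  exact lt_irrefl _ this

end Abelianization

lemma not_isLeinster_of_isCyclic_abelianization {G : Type*} [Group G] [Fintype G] {p q r : ℕ}
    (hp : p.Prime) (hq : q.Prime) (hr : r.Prime) (hpq : p < q) (hqr : q < r)
    (hK : Nat.card (commutator G) = r) (hQ : Nat.card (Abelianization G) = p ^ 2 * q)
    [IsCyclic (Abelianization G)] : ¬ IsLeinster G := by
  intro hL
  have hσ : subgroupSum (Abelianization G) = (1 + p + p ^ 2) * (1 + q) := by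
    rw [IsCyclic.subgroupSum_eq_sum_divisors, hQ, Nat.Coprime.sum_divisors_mul,
      Nat.sum_divisors_prime_pow hp, hq.sum_divisors]
    · rw [Finset.sum_range_succ, Finset.sum_range_succ, Finset.sum_range_one]
      ring
    · exact Nat.Coprime.pow_left 2 ((Nat.coprime_primes hp hq).mpr hpq.ne)
  have hcop : r.Coprime (p ^ 2 * q) :=
    Nat.Coprime.mul_right (Nat.Coprime.pow_right 2 ((Nat.coprime_primes hr hp).mpr (by omega)))
      ((Nat.coprime_primes hr hq).mpr hqr.ne')
  have hsplit := sigmaN_eq_of_surjective (f := (Abelianization.of : G →* _))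
    (QuotientGroup.mk'_surjective _)
  have hG := card_mul_card_ker_of_surjective (f := (Abelianization.of : G →* _))
    (QuotientGroup.mk'_surjective _)
  rw [Abelianization.ker_of, hK] at hsplit hG
  have hbound := sum_card_normal_not_commutator_le_add_card_le (by rwa [hK]) (by rwa [hK, hQ])
  have hpos : 0 < ∑ N : Subgroup G with N.Normal ∧ ¬ commutator G ≤ N, Nat.card N := by
    refine Finset.sum_pos' (fun _ _ => Nat.zero_le _) ⟨⊥, ?_, Nat.card_pos⟩
    simp only [Finset.mem_filter, Finset.mem_univ, true_and, le_bot_iff]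
    refine ⟨inferInstance, fun h => hr.one_lt.ne' ?_⟩
    rw [← hK, h, Subgroup.card_bot]
  rw [hσ, hQ] at hbound
  rw [hσ, hL, ← Nat.card_eq_fintype_card, ← hG, hQ] at hsplit
  exact leinster_count_contradiction hp hq hpq hqr (by linarith) hbound hpos

theorem stmt8 (G : Type*) [Group G] [Fintype G] (p q r : ℕ)
    (hp : p.Prime) (hq : q.Prime) (hr : r.Prime) (hpq : p < q) (hqr : q < r)
    (hcard : Fintype.card G = p ^ 2 * q * r) (h : IsLeinster G) :
    Nat.card (commutator G) ≠ r := by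
  intro hK
  have hQ : Nat.card (Abelianization G) = p ^ 2 * q := by
    have := (commutator G).card_mul_index
    rw [hK, Nat.card_eq_fintype_card, hcard, mul_comm] at this
    exact Nat.eq_of_mul_eq_mul_right hr.pos this
  by_cases hcyc : IsCyclic (Abelianization G)
  · exact not_isLeinster_of_isCyclic_abelianization hp hq hr hpq hqr hK hQ h
  · exact not_isLeinster_of_not_isCyclic_abelianization hp hq hpq.ne hQ hcyc h
end

section
/- If G is a Leinster group of order p²qr with p < q < r primes, then the commutator subgroup of G does not have order pq. -/
open scoped Classical

/-! The Sylow `q`-subgroup of `G'` (of order `pq`, `p < q`) is unique, hence characteristic in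
`G'` and normal in `G`; call it `N`. In `G ⧸ N`, of order `p²r`, the Sylow `r`-subgroup is unique
since `r > p + 1`, so its preimage `M` is normal of index `p²`. Groups of order `p²` are abelian,
hence `G' ≤ M`, which is impossible because `pq` does not divide `|M| = qr`. -/

theorem Nat.eq_one_of_modEq_one_of_lt {d q : ℕ} (h : d ≡ 1 [MOD q]) (hd : d < q) (hq : 1 < q) :
    d = 1 := by
  rwa [Nat.ModEq, Nat.mod_eq_of_lt hd, Nat.mod_eq_of_lt hq] at h

namespace Sylow

variable {G : Type*} [Group G] [Finite G] {q : ℕ} [Fact q.Prime]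

theorem card_eq_of_card_eq_mul (P : Sylow q G) {k m : ℕ} (hG : Nat.card G = q ^ k * m)
    (hm : ¬q ∣ m) : Nat.card P = q ^ k := by
  have hq : q.Prime := Fact.out
  have hm0 : m ≠ 0 := by rintro rfl; exact hm (dvd_zero q)
  rw [P.card_eq_multiplicity, hG, Nat.factorization_mul (pow_ne_zero k hq.ne_zero) hm0,
    hq.factorization_pow, Finsupp.add_apply, Nat.factorization_eq_zero_of_not_dvd hm]
  simp

theorem index_eq_of_card_eq_mul (P : Sylow q G) {k m : ℕ} (hG : Nat.card G = q ^ k * m)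
    (hm : ¬q ∣ m) : (P : Subgroup G).index = m := by
  have h := (P : Subgroup G).card_mul_index
  rw [P.card_eq_of_card_eq_mul hG hm, hG] at h
  exact Nat.eq_of_mul_eq_mul_left (pow_pos (Fact.out : q.Prime).pos k) h

theorem subsingleton_of_forall_dvd_index (P : Sylow q G)
    (h : ∀ d, d ∣ (P : Subgroup G).index → d ≡ 1 [MOD q] → d = 1) : Subsingleton (Sylow q G) :=
  Finite.card_le_one_iff_subsingleton.mp
    (h _ P.card_dvd_index (card_sylow_modEq_one q G)).le

theorem subsingleton_of_index_lt (P : Sylow q G) (h : (P : Subgroup G).index < q) :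
    Subsingleton (Sylow q G) := by
  refine P.subsingleton_of_forall_dvd_index fun d hd hd1 => ?_
  have hdq : d < q :=
    (Nat.le_of_dvd (Nat.pos_of_ne_zero Subgroup.index_ne_zero_of_finite) hd).trans_lt h
  exact Nat.eq_one_of_modEq_one_of_lt hd1 hdq (Fact.out : q.Prime).one_lt

theorem subsingleton_of_index_eq_sq (P : Sylow q G) {p : ℕ} (hp : p.Prime)
    (h : (P : Subgroup G).index = p ^ 2) (hpq : p + 1 < q) : Subsingleton (Sylow q G) := by
  have hq : q.Prime := Fact.out
  refine P.subsingleton_of_forall_dvd_index fun d hd hd1 => ?_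
  obtain ⟨i, hi, rfl⟩ := (Nat.dvd_prime_pow hp).mp (h ▸ hd)
  -- `q > p + 1` divides neither `p - 1` nor `p + 1`, so neither `p` nor `p ^ 2` is `1` mod `q`.
  interval_cases i
  · rfl
  · rw [pow_one] at hd1 ⊢
    exact Nat.eq_one_of_modEq_one_of_lt hd1 (by omega) hq.one_lt
  · have hdvd : q ∣ (p + 1) * (p - 1) := by
      have := (Nat.modEq_iff_dvd' (Nat.one_le_pow _ _ hp.pos)).mp hd1.symm
      simpa [Nat.sq_sub_sq p 1] using this
    rcases hq.dvd_mul.mp hdvd with h' | h'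
    · exact absurd (Nat.le_of_dvd (by omega) h') (by omega)
    · exact absurd (Nat.le_of_dvd (by have := hp.two_le; omega) h') (by omega)

end Sylow

theorem Subgroup.exists_normal_card_eq_of_card_eq_mul_of_lt {G : Type*} [Group G] [Finite G]
    (K : Subgroup G) [K.Normal] {q k m : ℕ} (hq : q.Prime)
    (hcard : Nat.card K = q ^ k * m) (hm : m < q) :
    ∃ N : Subgroup G, N.Normal ∧ Nat.card N = q ^ k := by
  have := Fact.mk hq
  obtain ⟨Q⟩ : Nonempty (Sylow q K) := inferInstance
  have hqm : ¬q ∣ m := Nat.not_dvd_of_pos_of_lt (Nat.pos_of_ne_zero fun hm0 => by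
    simp [hm0, Nat.card_pos.ne'] at hcard) hm
  have := Q.subsingleton_of_index_lt (by rwa [Q.index_eq_of_card_eq_mul hcard hqm])
  -- `Q` is the only Sylow `q`-subgroup of `K`, so it is characteristic in `K`, hence normal in `G`.
  refine ⟨(Q : Subgroup K).map K.subtype, inferInstance, ?_⟩
  rw [Subgroup.card_map_of_injective K.subtype_injective, Q.card_eq_of_card_eq_mul hcard hqm]

theorem exists_normal_index_eq_sq {G : Type*} [Group G] [Finite G] {p r k : ℕ} (hp : p.Prime)
    (hr : r.Prime) (hpr : p + 1 < r) (hG : Nat.card G = r ^ k * p ^ 2) :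
    ∃ R : Subgroup G, R.Normal ∧ R.index = p ^ 2 := by
  have := Fact.mk hr
  obtain ⟨R⟩ : Nonempty (Sylow r G) := inferInstance
  have hrp : ¬r ∣ p ^ 2 := fun h => by
    have := Nat.le_of_dvd hp.pos (hr.dvd_of_dvd_pow h)
    omega
  have hR := R.index_eq_of_card_eq_mul hG hrp
  have := R.subsingleton_of_index_eq_sq hp hR hpr
  exact ⟨R, R.normal_of_subsingleton, hR⟩

theorem commutator_le_of_index_eq_prime_sq {G : Type*} [Group G] {M : Subgroup G} [M.Normal]
    {p : ℕ} [Fact p.Prime] (hM : M.index = p ^ 2) : commutator G ≤ M := by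
  rw [← Subgroup.Normal.quotient_commutative_iff_commutator_le]
  exact IsPGroup.isMulCommutative_of_card_eq_prime_sq (by rwa [← Subgroup.index_eq_card])

theorem stmt10_general (G : Type*) [Group G] [Fintype G] (p q r : ℕ)
    (hp : p.Prime) (hq : q.Prime) (hr : r.Prime) (hpq : p < q) (hqr : q < r)
    (hcard : Fintype.card G = p ^ 2 * q * r) :
    Nat.card (commutator G) ≠ p * q := by
  intro hK
  have := Fact.mk hp
  have hG : Nat.card G = p ^ 2 * q * r := by rw [Nat.card_eq_fintype_card, hcard]
  obtain ⟨N, hN, hNcard⟩ := (commutator G).exists_normal_card_eq_of_card_eq_mul_of_lt hq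
    (k := 1) (m := p) (by rw [hK, pow_one, mul_comm]) hpq
  have hGN : Nat.card (G ⧸ N) = r ^ 1 * p ^ 2 := by
    have h := N.card_eq_card_quotient_mul_card_subgroup
    rw [hG, hNcard] at h
    exact Nat.eq_of_mul_eq_mul_right hq.pos (by linear_combination h.symm)
  obtain ⟨R, hR, hRindex⟩ := exists_normal_index_eq_sq hp hr (by omega) hGN
  set M := R.comap (QuotientGroup.mk' N)
  have hMindex : M.index = p ^ 2 :=
    (Subgroup.index_comap_of_surjective _ (QuotientGroup.mk'_surjective N)).trans hRindex
  have hMcard : Nat.card M = q * r := by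
    have h := M.card_mul_index
    rw [hG, hMindex] at h
    exact Nat.eq_of_mul_eq_mul_right (pow_pos hp.pos 2) (by linear_combination h)
  have hpqr : p * q ∣ q * r := hK ▸ hMcard ▸ Subgroup.card_dvd_of_le
    (commutator_le_of_index_eq_prime_sq hMindex)
  have hpr : p ∣ r := Nat.dvd_of_mul_dvd_mul_left hq.pos (by rwa [mul_comm q p])
  exact absurd ((Nat.prime_dvd_prime_iff_eq hp hr).mp hpr) (by omega)

theorem stmt10 (G : Type*) [Group G] [Fintype G] (p q r : ℕ)
    (hp : p.Prime) (hq : q.Prime) (hr : r.Prime) (hpq : p < q) (hqr : q < r)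
    (hcard : Fintype.card G = p ^ 2 * q * r) (h : IsLeinster G) :
    Nat.card (commutator G) ≠ p * q :=
  stmt10_general G p q r hp hq hr hpq hqr hcard
end
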